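/- arXiv:0907.4449 — 5 statements merged into one kernel-verified Lean document; each statement's English description precedes it below -/
import Mathlib

section
/- Let u : R → R be a convex increasing function with u(x) ≤ log √(1 + e^{2x}) for all x, and suppose lim_{x→-∞} (u(x) - νx) exists and is finite for some 0 < ν < 1. Then u(x) ≤ ν x + C_ν for all x ≤ log R_ν, where R_ν = (ν/(1-ν))^{1/2} and C_ν = log √(1+R_ν²) − ν log R_ν. -/
/-!
Subtracting the linear function `ν x` keeps `u` convex, and a convex function on `ℝ` that stays
bounded above as `x → -∞` is nondecreasing: otherwise it would lie above a secant line of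
negative slope, which tends to `+∞` there. Hence `u x - ν x ≤ u x₀ - ν x₀` for `x ≤ x₀ = log R`,
and the bound `u x₀ ≤ log √(1 + e^{2 x₀}) = log √(1 + R²)` gives exactly `C`.
-/

open Set Filter

theorem ConvexOn.monotone_of_eventually_le_atBot {f : ℝ → ℝ} (hf : ConvexOn ℝ univ f) {M : ℝ}
    (hM : ∀ᶠ x in atBot, f x ≤ M) : Monotone f := by
  intro a b hab
  by_contra! hba
  have hlt : a < b := hab.lt_of_ne (by rintro rfl; exact hba.false)
  set s := (f b - f a) / (b - a)
  have hs : s < 0 := div_neg_of_neg_of_pos (sub_neg.2 hba) (sub_pos.2 hlt)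
  have hsecant : ∀ x < a, f a + s * (x - a) ≤ f x := by
    intro x hxa
    have := hf.slope_mono_adjacent (mem_univ x) (mem_univ b) hxa hlt
    rw [div_le_iff₀ (sub_pos.2 hxa)] at this
    linarith
  have hline : Tendsto (fun x => f a + s * (x - a)) atBot atTop :=
    tendsto_atTop_add_const_left _ _
      ((tendsto_atBot_add_const_right _ (-a) tendsto_id).const_mul_atBot_of_neg hs)
  obtain ⟨x, hxM, hxa, hMx⟩ :=
    (hM.and ((eventually_lt_atBot a).and (hline.eventually_gt_atTop M))).exists
  linarith [hsecant x hxa]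

theorem ConvexOn.sub_const_mul {f : ℝ → ℝ} (hf : ConvexOn ℝ univ f) (c : ℝ) :
    ConvexOn ℝ univ (fun x => f x - c * x) :=
  hf.sub ((LinearMap.mul ℝ ℝ c).concaveOn convex_univ)

theorem stmt_5_general (ν : ℝ) (h0 : 0 < ν) (h1 : ν < 1) (u : ℝ → ℝ)
    (hconv : ConvexOn ℝ Set.univ u)
    (hle : ∀ x : ℝ, u x ≤ Real.log (Real.sqrt (1 + Real.exp (2 * x))))
    (L : ℝ) (hL : Filter.Tendsto (fun x => u x - ν * x) Filter.atBot (nhds L)) :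
    let R : ℝ := Real.sqrt (ν / (1 - ν))
    let C : ℝ := Real.log (Real.sqrt (1 + R ^ 2)) - ν * Real.log R
    ∀ x : ℝ, x ≤ Real.log R → u x ≤ ν * x + C := by
  intro R C x hx
  have hR : 0 < R := Real.sqrt_pos.2 (div_pos h0 (sub_pos.2 h1))
  have hmono : Monotone fun x => u x - ν * x :=
    (hconv.sub_const_mul ν).monotone_of_eventually_le_atBot
      (hL.eventually (ge_mem_nhds (lt_add_one L)))
  have hexp : Real.exp (2 * Real.log R) = R ^ 2 := by
    rw [mul_comm, Real.exp_mul, Real.exp_log hR, Real.rpow_two]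
  have hx₀ := hle (Real.log R)
  rw [hexp] at hx₀
  linarith [hmono hx]

/-- If u : ℝ → ℝ is convex increasing with u(x) ≤ log √(1+e^{2x}) and u(x) − νx has a
finite limit as x → −∞ (0 < ν < 1), then u(x) ≤ νx + C_ν for all x ≤ log R_ν, where
R_ν = √(ν/(1-ν)) and C_ν = log √(1+R_ν²) − ν log R_ν. -/
theorem stmt_5 (ν : ℝ) (h0 : 0 < ν) (h1 : ν < 1) (u : ℝ → ℝ)
    (hconv : ConvexOn ℝ Set.univ u) (hmono : Monotone u)
    (hle : ∀ x : ℝ, u x ≤ Real.log (Real.sqrt (1 + Real.exp (2 * x))))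
    (L : ℝ) (hL : Filter.Tendsto (fun x => u x - ν * x) Filter.atBot (nhds L)) :
    let R : ℝ := Real.sqrt (ν / (1 - ν))
    let C : ℝ := Real.log (Real.sqrt (1 + R ^ 2)) - ν * Real.log R
    ∀ x : ℝ, x ≤ Real.log R → u x ≤ ν * x + C :=
  stmt_5_general ν h0 h1 u hconv hle L hL
end

section
/- Let D = {(z,w) ∈ C² : |zw| < 1}. If v : D → [-∞, 0) is plurisubharmonic with v(0,0) = -∞, then v ≡ -∞ on the lines {z = 0} and {w = 0}. -/
/-! Both coordinate lines lie in `D`, so on each of them `v` restricts to a subharmonic function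
`u ≤ 0` on all of `ℂ` with `u 0 = -∞`. Such a `u` is identically `-∞`: given `z ≠ 0` and `M`,
upper semicontinuity gives `u ≤ -2M` on a small circle `|t| = δ`, while `u ≤ 0` on `|t| = |z|²/δ`;
as `log |z|` is the midpoint of the two log-radii, Hadamard's three circles theorem gives
`u z ≤ -M`. The three circles theorem is the maximum principle for `u - α log |t| - β`, made strict
by the perturbation `η (R² - |t|²)`; since subharmonicity is only tested against harmonic
polynomials `Re p`, near each point `log |t|` is replaced by the real part of a Taylor polynomial
of the logarithm. -/

/-- Plurisubharmonicity on a subset of ℂ², via upper semicontinuity and the domination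
principle along complex lines: real parts of polynomials (harmonic majorants on discs)
dominating v on a circle of a complex line contained in the set dominate v on the disc. -/
def PshOn (v : ℂ × ℂ → EReal) (D : Set (ℂ × ℂ)) : Prop :=
  UpperSemicontinuousOn v D ∧
  ∀ (a b : ℂ × ℂ) (c : ℂ) (r : ℝ), 0 < r →
    (∀ t ∈ Metric.closedBall c r, a + t • b ∈ D) →
    ∀ p : Polynomial ℂ,
      (∀ t ∈ Metric.sphere c r, v (a + t • b) ≤ (((p.eval t).re : ℝ) : EReal)) →
      ∀ t ∈ Metric.closedBall c r, v (a + t • b) ≤ (((p.eval t).re : ℝ) : EReal)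

open Filter Topology Metric Polynomial ComplexConjugate

namespace Complex

noncomputable def logTaylorPoly (n : ℕ) : ℂ[X] :=
  ∑ j ∈ Finset.range n, C ((-1 : ℂ) ^ (j + 1) / j) * X ^ j

@[simp]
theorem eval_logTaylorPoly (n : ℕ) (z : ℂ) : (logTaylorPoly n).eval z = logTaylor n z := by
  simp [logTaylorPoly, logTaylor, eval_finsetSum, mul_div_right_comm]

theorem norm_log_sub_logTaylor_le_of_norm_le (n : ℕ) {z : ℂ} {r : ℝ} (hzr : ‖z‖ ≤ r) (hr : r < 1) :
    ‖log (1 + z) - logTaylor (n + 1) z‖ ≤ r ^ (n + 1) / (1 - r) := by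
  have hz : ‖z‖ < 1 := hzr.trans_lt hr
  calc ‖log (1 + z) - logTaylor (n + 1) z‖
      ≤ ‖z‖ ^ (n + 1) * (1 - ‖z‖)⁻¹ / (n + 1) := norm_log_sub_logTaylor_le n hz
    _ ≤ ‖z‖ ^ (n + 1) / (1 - ‖z‖) := by
        rw [← div_eq_mul_inv]
        exact div_le_self (by have := sub_pos.2 hz; positivity) (by linarith)
    _ ≤ r ^ (n + 1) / (1 - r) := by
        have := (norm_nonneg z).trans hzr
        gcongr

theorem exists_polynomial_re_near_log_norm {c : ℂ} {ρ ε : ℝ} (hρ : 0 ≤ ρ) (hρc : ρ < ‖c‖)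
    (hε : 0 < ε) : ∃ p : ℂ[X], ∀ t ∈ closedBall c ρ, |(p.eval t).re - Real.log ‖t‖| ≤ ε := by
  have hc : 0 < ‖c‖ := hρ.trans_lt hρc
  set r := ρ / ‖c‖
  have hr : r < 1 := (div_lt_one hc).2 hρc
  obtain ⟨N, hN⟩ : ∃ N : ℕ, r ^ (N + 1) / (1 - r) < ε := by
    have : Tendsto (fun n : ℕ ↦ r ^ (n + 1) / (1 - r)) atTop (𝓝 (0 / (1 - r))) :=
      ((tendsto_pow_atTop_nhds_zero_of_lt_one (by positivity) hr).comp
        (tendsto_add_atTop_nat 1)).div_const _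
    exact ((zero_div (1 - r) ▸ this).eventually_lt_const hε).exists
  refine ⟨C (log c) + (logTaylorPoly (N + 1)).comp (C c⁻¹ * (X - C c)), fun t ht ↦ ?_⟩
  set z := c⁻¹ * (t - c)
  have hzr : ‖z‖ ≤ r := by
    rw [norm_mul, norm_inv, inv_mul_le_iff₀ hc, mul_div_cancel₀ _ hc.ne', ← dist_eq]
    exact ht
  have hc0 : c ≠ 0 := norm_pos_iff.1 hc
  have ht_eq : t = c * (1 + z) := by
    simp only [z, mul_add, mul_one, ← mul_assoc, mul_inv_cancel₀ hc0, one_mul]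
    ring
  have hlog : Real.log ‖t‖ = (log c + log (1 + z)).re := by
    have h1z : 1 + z ≠ 0 := fun h ↦ by
      have : z = -1 := by linear_combination h
      rw [this, norm_neg, norm_one] at hzr
      exact hr.not_ge hzr
    rw [add_re, log_re, log_re, ← Real.log_mul (norm_ne_zero_iff.2 hc0) (norm_ne_zero_iff.2 h1z),
      ← norm_mul, ← ht_eq]
  calc |((C (log c) + (logTaylorPoly (N + 1)).comp (C c⁻¹ * (X - C c))).eval t).re - Real.log ‖t‖|
      = |(logTaylor (N + 1) z - log (1 + z)).re| := by
        rw [hlog]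
        simp [z]
    _ ≤ ‖log (1 + z) - logTaylor (N + 1) z‖ := by
        rw [← norm_neg, neg_sub]
        exact abs_re_le_norm _
    _ ≤ ε := (norm_log_sub_logTaylor_le_of_norm_le N hzr hr).trans hN.le

theorem norm_sq_eq_of_mem_sphere {c t : ℂ} {ρ : ℝ} (ht : t ∈ sphere c ρ) :
    ‖t‖ ^ 2 = ‖c‖ ^ 2 + 2 * ((t - c) * conj c).re + ρ ^ 2 := by
  rw [← mem_sphere_iff_norm.1 ht, ← Complex.inner, ← norm_add_sq_real, add_sub_cancel]

theorem exists_polynomial_re_above_log_barrier (a b : ℝ) {η : ℝ} (hη : 0 < η) {c : ℂ} {ρ : ℝ}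
    (hρ : 0 < ρ) (hρc : ρ < ‖c‖) :
    ∃ q : ℂ[X], (∀ t ∈ sphere c ρ, a * Real.log ‖t‖ + b - η * ‖t‖ ^ 2 ≤ (q.eval t).re) ∧
      (q.eval c).re < a * Real.log ‖c‖ + b - η * ‖c‖ ^ 2 := by
  set κ := η * ρ ^ 2 / 4 with hκ
  obtain ⟨p, hp⟩ := exists_polynomial_re_near_log_norm hρ.le hρc
    (show 0 < κ / (|a| + 1) by positivity)
  have happrox : ∀ t ∈ closedBall c ρ, |a * (p.eval t).re - a * Real.log ‖t‖| ≤ κ := by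
    intro t ht
    calc |a * (p.eval t).re - a * Real.log ‖t‖| = |a| * |(p.eval t).re - Real.log ‖t‖| := by
          rw [← mul_sub, abs_mul]
      _ ≤ (|a| + 1) * (κ / (|a| + 1)) := by gcongr; exacts [by linarith, hp t ht]
      _ = κ := mul_div_cancel₀ _ (by positivity)
  set q : ℂ[X] := C (a : ℂ) * p + C ((b - η * ‖c‖ ^ 2 - 3 * κ : ℝ) : ℂ) -
    C ((2 * η : ℝ) : ℂ) * ((X - C c) * C (conj c))
  have hq : ∀ t, (q.eval t).re =
      a * (p.eval t).re + (b - η * ‖c‖ ^ 2 - 3 * κ) - 2 * η * ((t - c) * conj c).re := by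
    intro t
    simp only [q, eval_add, eval_sub, eval_mul, eval_C, eval_X, add_re, sub_re, re_ofReal_mul,
      ofReal_re]
  refine ⟨q, fun t ht ↦ ?_, ?_⟩
  · have := abs_le.1 (happrox t (sphere_subset_closedBall ht))
    rw [hq, norm_sq_eq_of_mem_sphere ht]
    linarith
  · have := abs_le.1 (happrox c (mem_closedBall_self hρ.le))
    rw [hq, sub_self, zero_mul, zero_re, mul_zero, sub_zero]
    linarith [show 0 < κ by positivity]

end Complex

/-- The one-variable form of `PshOn`: subharmonicity tested against harmonic polynomials only. -/
def IsPolySubharmonic (u : ℂ → EReal) : Prop :=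
  UpperSemicontinuous u ∧ ∀ (c : ℂ) (r : ℝ), 0 < r → ∀ p : ℂ[X],
    (∀ t ∈ sphere c r, u t ≤ ((p.eval t).re : EReal)) → u c ≤ ((p.eval c).re : EReal)

namespace IsPolySubharmonic

variable {u : ℂ → EReal}

theorem le_of_forall_mem_frontier_le (hu : IsPolySubharmonic u) (hu_top : ∀ t, u t ≠ ⊤)
    {K : Set ℂ} (hK : IsCompact K) {g : ℂ → ℝ} (hg : ContinuousOn g K)
    (hg_super : ∀ c ∈ interior K, ∀ᶠ ρ in 𝓝[>] 0,
      ∃ q : ℂ[X], (∀ t ∈ sphere c ρ, g t ≤ (q.eval t).re) ∧ (q.eval c).re < g c)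
    (hfrontier : ∀ t ∈ frontier K, u t ≤ g t) {t : ℂ} (ht : t ∈ K) : u t ≤ g t := by
  set f : ℂ → EReal := fun t ↦ u t - g t
  have hf : UpperSemicontinuousOn f K := by
    have hg' : UpperSemicontinuousOn (fun t ↦ ((-g t : ℝ) : EReal)) K :=
      (continuous_coe_real_ereal.comp_continuousOn hg.neg).upperSemicontinuousOn
    simpa only [f, sub_eq_add_neg, EReal.coe_neg] using (hu.1.upperSemicontinuousOn K).add' hg'
      fun x _ ↦ EReal.continuousAt_add (Or.inr (EReal.coe_ne_bot _)) (Or.inr (EReal.coe_ne_top _))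
  have hf_le {s : ℂ} {m : ℝ} : f s ≤ m ↔ u s ≤ ((m + g s : ℝ) : EReal) := by
    rw [EReal.sub_le_iff_le_add (Or.inl (EReal.coe_ne_bot _)) (Or.inl (EReal.coe_ne_top _)),
      EReal.coe_add]
  obtain ⟨s, hsK, hs_max⟩ := hf.exists_isMaxOn ⟨t, ht⟩ hK
  by_contra! hgt
  have hfs_pos : 0 < f s := (EReal.sub_pos.2 hgt).trans_le (hs_max ht)
  have hs_int : s ∈ interior K := by
    by_contra hs
    have := hfrontier s (hK.isClosed.frontier_eq ▸ ⟨hsK, hs⟩)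
    exact (hfs_pos.trans_le (hf_le.2 (by simpa using this))).false
  set m := (f s).toReal
  have hfs_top : f s ≠ ⊤ := by
    simpa only [f, sub_eq_add_neg, ← EReal.coe_neg] using EReal.add_ne_top (hu_top s) (by simp)
  have hm : (m : EReal) = f s := EReal.coe_toReal hfs_top hfs_pos.ne_bot
  obtain ⟨ε, hε, hball⟩ := Metric.mem_nhds_iff.1 (mem_interior_iff_mem_nhds.1 hs_int)
  obtain ⟨ρ, ⟨q, hq_sphere, hq_center⟩, hρ⟩ :=
    ((hg_super s hs_int).and (Ioo_mem_nhdsGT hε)).exists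
  have hdom := hu.2 s ρ hρ.1 (q + C (m : ℂ)) fun t' ht' ↦ by
    have := hf_le.1 (hm ▸ hs_max (hball (sphere_subset_ball hρ.2 ht')))
    refine this.trans (EReal.coe_le_coe_iff.2 ?_)
    simp only [eval_add, eval_C, Complex.add_re, Complex.ofReal_re]
    linarith [hq_sphere t' ht']
  have : f s ≤ ((q.eval s).re + m - g s : ℝ) := by
    rw [hf_le, sub_add_cancel]
    simpa using hdom
  exact (hm ▸ this).not_gt (EReal.coe_lt_coe_iff.2 (by linarith))

theorem three_circles (hu : IsPolySubharmonic u) (hu_top : ∀ t, u t ≠ ⊤) {δ R M₁ M₂ : ℝ}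
    (hδ : 0 < δ) (hδR : δ < R) (h₁ : ∀ t : ℂ, ‖t‖ = δ → u t ≤ M₁)
    (h₂ : ∀ t : ℂ, ‖t‖ = R → u t ≤ M₂) {z : ℂ} (hδz : δ ≤ ‖z‖) (hzR : ‖z‖ ≤ R) :
    u z ≤ ((M₁ * Real.log (R / ‖z‖) + M₂ * Real.log (‖z‖ / δ)) / Real.log (R / δ) : ℝ) := by
  have hR : 0 < R := hδ.trans hδR
  have hL : 0 < Real.log (R / δ) := Real.log_pos ((one_lt_div hδ).2 hδR)
  set α := (M₂ - M₁) / Real.log (R / δ)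
  set β := M₁ - α * Real.log δ
  have hαR : α * Real.log R + β = M₂ := by
    rw [Real.log_div hR.ne' hδ.ne'] at hL
    simp only [α, β, Real.log_div hR.ne' hδ.ne']
    field_simp
    ring
  have hαz : α * Real.log ‖z‖ + β =
      (M₁ * Real.log (R / ‖z‖) + M₂ * Real.log (‖z‖ / δ)) / Real.log (R / δ) := by
    have hz : ‖z‖ ≠ 0 := (hδ.trans_le hδz).ne'
    simp only [α, β]
    rw [Real.log_div hR.ne' hz, Real.log_div hz hδ.ne']
    rw [Real.log_div hR.ne' hδ.ne'] at hL ⊢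
    field_simp
    ring
  have hαδ : α * Real.log δ + β = M₁ := add_sub_cancel _ _
  set K := closedBall (0 : ℂ) R \ ball 0 δ
  have hK : IsCompact K := (isCompact_closedBall 0 R).diff isOpen_ball
  have hK_pos {c : ℂ} (hc : c ∈ K) : 0 < ‖c‖ :=
    hδ.trans_le (not_lt.1 fun h ↦ hc.2 (mem_ball_zero_iff.2 h))
  have hK_frontier {t : ℂ} (ht : t ∈ frontier K) : ‖t‖ = δ ∨ ‖t‖ = R := by
    rw [hK.isClosed.frontier_eq] at ht
    have hopen : ball (0 : ℂ) R \ closedBall 0 δ ⊆ interior K :=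
      interior_maximal (Set.sdiff_subset_sdiff ball_subset_closedBall ball_subset_closedBall)
        (isOpen_ball.sdiff isClosed_closedBall)
    have h1 := mem_closedBall_zero_iff.1 ht.1.1
    have h2 := not_lt.1 (mt mem_ball_zero_iff.2 ht.1.2)
    by_contra! h
    exact ht.2 (hopen ⟨mem_ball_zero_iff.2 (lt_of_le_of_ne h1 h.2),
      fun h' ↦ h.1 (le_antisymm (mem_closedBall_zero_iff.1 h') h2)⟩)
  set bound : ℝ → ℝ := fun η ↦ α * Real.log ‖z‖ + β + η * (R ^ 2 - ‖z‖ ^ 2)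
  have hbound {η : ℝ} (hη : 0 < η) : u z ≤ bound η := by
    set g : ℂ → ℝ := fun t ↦ α * Real.log ‖t‖ + (β + η * R ^ 2) - η * ‖t‖ ^ 2
    have hg : ContinuousOn g K :=
      ((continuousOn_const.mul (continuous_norm.continuousOn.log fun c hc ↦ (hK_pos hc).ne')).add
        continuousOn_const).sub (by fun_prop)
    have hg_frontier (t : ℂ) (ht : t ∈ frontier K) : u t ≤ g t := by
      rcases hK_frontier ht with ht' | ht'
      · refine (h₁ t ht').trans (EReal.coe_le_coe_iff.2 ?_)
        simp only [g, ht']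
        nlinarith [mul_le_mul_of_nonneg_left (pow_le_pow_left₀ hδ.le hδR.le 2) hη.le]
      · refine (h₂ t ht').trans (EReal.coe_le_coe_iff.2 ?_)
        simp only [g, ht']
        linarith
    have hzK : z ∈ K := ⟨mem_closedBall_zero_iff.2 hzR, fun h ↦ (mem_ball_zero_iff.1 h).not_ge hδz⟩
    convert hu.le_of_forall_mem_frontier_le hu_top hK hg (fun c hc ↦ ?_) hg_frontier hzK using 2
    · simp only [bound, g]
      ring
    filter_upwards [Ioo_mem_nhdsGT (hK_pos (interior_subset hc))] with ρ hρ
    exact Complex.exists_polynomial_re_above_log_barrier α _ hη hρ.1 hρ.2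
  have hlim : Tendsto (fun η ↦ (bound η : EReal)) (𝓝[>] 0) (𝓝 (bound 0)) :=
    ((continuous_coe_real_ereal.comp (by fun_prop)).tendsto 0).mono_left nhdsWithin_le_nhds
  rw [← hαz, show α * Real.log ‖z‖ + β = bound 0 by simp [bound]]
  exact ge_of_tendsto hlim (eventually_nhdsWithin_of_forall fun η hη ↦ hbound hη)

theorem eq_bot_of_nonpos (hu : IsPolySubharmonic u) (hu_nonpos : ∀ t, u t ≤ 0) (h0 : u 0 = ⊥)
    (z : ℂ) : u z = ⊥ := by
  rcases eq_or_ne z 0 with rfl | hz0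
  · exact h0
  have hz : 0 < ‖z‖ := norm_pos_iff.2 hz0
  suffices h : ∀ M : ℝ, u z ≤ (-M : ℝ) from
    (EReal.eq_bot_iff_forall_lt _).2 fun y ↦
      (h (|y| + 1)).trans_lt (EReal.coe_lt_coe_iff.2 (by linarith [neg_abs_le y]))
  intro M
  obtain ⟨ε, hε, hball⟩ := Metric.eventually_nhds_iff.1
    (hu.1 0 (-2 * M : ℝ) (h0.trans_lt (EReal.bot_lt_coe _)))
  set δ := min (ε / 2) (‖z‖ / 2)
  have hδ : 0 < δ := lt_min (half_pos hε) (half_pos hz)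
  have hδε : δ < ε := (min_le_left _ _).trans_lt (half_lt_self hε)
  have hδz : δ < ‖z‖ := (min_le_right _ _).trans_lt (half_lt_self hz)
  have hℓ : 0 < Real.log (‖z‖ / δ) := Real.log_pos ((one_lt_div hδ).2 hδz)
  set R := ‖z‖ * (‖z‖ / δ)
  have hzR : ‖z‖ < R := lt_mul_of_one_lt_right hz ((one_lt_div hδ).2 hδz)
  have hbound := hu.three_circles (fun t ↦ ne_top_of_le_ne_top EReal.zero_ne_top (hu_nonpos t))
    hδ (hδz.trans hzR) (M₁ := -2 * M) (M₂ := 0)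
    (fun t ht ↦ (hball (by rwa [dist_zero_right, ht])).le)
    (fun t _ ↦ (hu_nonpos t).trans_eq EReal.coe_zero.symm) hδz.le hzR.le
  have hRz : R / ‖z‖ = ‖z‖ / δ := mul_div_cancel_left₀ _ hz.ne'
  have hRδ : R / δ = (‖z‖ / δ) ^ 2 := by simp only [R]; ring
  rw [hRz, hRδ, Real.log_pow] at hbound
  convert hbound using 2
  field_simp
  ring

end IsPolySubharmonic

theorem PshOn.isPolySubharmonic_comp_line {v : ℂ × ℂ → EReal} {D : Set (ℂ × ℂ)} (hv : PshOn v D)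
    {a b : ℂ × ℂ} (hD : ∀ t : ℂ, a + t • b ∈ D) : IsPolySubharmonic fun t ↦ v (a + t • b) :=
  ⟨upperSemicontinuousOn_univ_iff.1 <|
      hv.1.comp (by fun_prop : Continuous fun t : ℂ ↦ a + t • b).continuousOn fun t _ ↦ hD t,
    fun c r hr p hp ↦ hv.2 a b c r hr (fun t _ ↦ hD t) p hp c (mem_closedBall_self hr.le)⟩

/-- On D = {(z,w) : |zw| < 1}, a negative plurisubharmonic function with v(0,0) = -∞
is identically -∞ on the coordinate lines {z = 0} and {w = 0}. -/
theorem stmt_7 (v : ℂ × ℂ → EReal)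
    (hpsh : PshOn v {p : ℂ × ℂ | ‖p.1 * p.2‖ < 1})
    (hneg : ∀ p : ℂ × ℂ, ‖p.1 * p.2‖ < 1 → v p < 0)
    (h0 : v (0, 0) = ⊥) :
    ∀ z : ℂ, v (z, 0) = ⊥ ∧ v (0, z) = ⊥ := by
  have hD (b : ℂ × ℂ) (hb : b.1 = 0 ∨ b.2 = 0) (t : ℂ) :
      0 + t • b ∈ {p : ℂ × ℂ | ‖p.1 * p.2‖ < 1} := by
    rcases hb with hb | hb <;> simp [hb]
  have hline (b : ℂ × ℂ) (hb : b.1 = 0 ∨ b.2 = 0) (t : ℂ) : v (0 + t • b) = ⊥ :=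
    (hpsh.isPolySubharmonic_comp_line (hD b hb)).eq_bot_of_nonpos
      (fun t ↦ (hneg _ (hD b hb t)).le) (by rw [zero_smul, add_zero]; exact h0) t
  intro z
  constructor
  · simpa using hline (1, 0) (Or.inr rfl) z
  · simpa using hline (0, 1) (Or.inl rfl) z
end

section
/- A bounded-above subharmonic function on C that takes the value -∞ at some point is identically -∞. -/
/-- Subharmonicity on ℂ for EReal-valued functions, via upper semicontinuity and the
domination principle by harmonic majorants: real parts of polynomials (which are dense
among harmonic functions on discs) dominating u on a circle dominate u on the disc. -/
def SubharmonicC (u : ℂ → EReal) : Prop :=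
  UpperSemicontinuous u ∧
  ∀ (c : ℂ) (r : ℝ), 0 < r → ∀ p : Polynomial ℂ,
    (∀ z ∈ Metric.sphere c r, u z ≤ (((p.eval z).re : ℝ) : EReal)) →
    ∀ z ∈ Metric.closedBall c r, u z ≤ (((p.eval z).re : ℝ) : EReal)

/-!
Let `u z₀ = -∞`, `u ≤ M`, and fix a level `t`. By upper semicontinuity `u < t` on a disc
`|w - z₀| ≤ δ`. For `R > δ` the harmonic function `t + (M - t) log (|w - z₀| / δ) / log (R / δ)`
dominates `u` on both boundary circles of the annulus `δ ≤ |w - z₀| ≤ R`, hence on the annulus;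
letting `R → ∞` gives `u ≤ t` everywhere.

The maximum principle on the annulus is reduced to the disc condition: holomorphic functions are
uniform limits of their Taylor polynomials on smaller discs, `log |w - z₀|` is locally the real
part of a branch of `log`, and a Poisson kernel with its pole just outside a circle is a peak
function, turning a strict inequality on a small arc into a strict inequality at the centre.
At the maximiser of `u - (α + β log |w - z₀|)` farthest from `z₀`, the points of a small circle
lying farther out are not maximisers, which gives the contradiction.
-/

open Metric Filter Topology Polynomial

lemma exists_polynomial_dist_lt {f : ℂ → ℂ} {a : ℂ} {s ρ ε : ℝ} (hs : 0 ≤ s) (hsρ : s < ρ)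
    (hf : DifferentiableOn ℂ f (ball a ρ)) (hε : 0 < ε) :
    ∃ p : ℂ[X], ∀ z ∈ closedBall a s, ‖f z - p.eval z‖ < ε := by
  obtain ⟨R, hsR, hRρ⟩ := exists_between hsρ
  obtain ⟨r, hsr, hrR⟩ := exists_between hsR
  have hR : 0 < R.toNNReal := Real.toNNReal_pos.2 (hs.trans_lt hsR)
  have hseries := (hf.mono (closedBall_subset_ball (by simpa [hsR.le.trans' hs] using hRρ))
    ).hasFPowerSeriesOnBall hR
  have hconv := hseries.tendstoUniformlyOn' (r' := r.toNNReal) (by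
    simpa [ENNReal.coe_lt_coe, Real.toNNReal_lt_toNNReal_iff (hs.trans_lt hsR)] using hrR)
  obtain ⟨n, hn⟩ := (Metric.tendstoUniformlyOn_iff.1 hconv ε hε).exists
  set c := cauchyPowerSeries f a R.toNNReal
  refine ⟨∑ k ∈ Finset.range n, C (c.coeff k) * (X - C a) ^ k, fun z hz => ?_⟩
  have heval : (∑ k ∈ Finset.range n, C (c.coeff k) * (X - C a) ^ k).eval z
      = c.partialSum n (z - a) := by
    simp [FormalMultilinearSeries.partialSum, eval_finsetSum, mul_comm]
  rw [heval, ← dist_eq_norm]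
  exact hn z (mem_ball.2 ((mem_closedBall.1 hz).trans_lt
    (by simpa [Real.coe_toNNReal _ (hs.trans hsr.le)] using hsr)))

lemma re_add_div_sub (p q : ℂ) : ((p + q) / (p - q)).re = (‖p‖ ^ 2 - ‖q‖ ^ 2) / ‖p - q‖ ^ 2 := by
  simp only [Complex.div_re, Complex.sq_norm, Complex.normSq_apply, Complex.add_re,
    Complex.sub_re, Complex.add_im, Complex.sub_im]
  ring

lemma exists_peak_function {a w : ℂ} {s d : ℝ} (hs : 0 < s) (hd : 0 < d) (hw : w ∈ sphere a s) :
    ∃ ρ > s, ∃ F : ℂ → ℂ, DifferentiableOn ℂ F (ball a ρ) ∧ 0 < (F a).re ∧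
      ∀ z ∈ sphere a s, (F z).re ≤ 1 ∧ (d ≤ dist z w → (F z).re ≤ 0) := by
  set d' := min d s
  have hd' : 0 < d' := lt_min hd hs
  have hd's : d' ≤ s := min_le_right d s
  set κ := d' ^ 2 / (24 * s)
  have hκ : 0 < κ := by positivity
  have hκs : κ ≤ s := by
    rw [div_le_iff₀ (by positivity)]; nlinarith
  have hκd' : κ ≤ d' / 2 := by
    rw [div_le_iff₀ (by positivity)]; nlinarith
  have hκ2 : κ * (2 * s + κ) ≤ d' ^ 2 / 8 := by
    calc κ * (2 * s + κ) ≤ κ * (3 * s) := by gcongr; linarith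
      _ = d' ^ 2 / 8 := by simp only [κ]; field_simp; ring
  set b := a + ((1 + κ / s : ℝ) : ℂ) * (w - a)
  have hwa : ‖w - a‖ = s := by rw [← dist_eq_norm]; exact hw
  have hba : dist b a = s + κ := by
    simp only [b, dist_eq_norm, add_sub_cancel_left, norm_mul, Complex.norm_real,
      Real.norm_eq_abs, hwa]
    rw [abs_of_pos (by positivity)]; field_simp
  have hbw : dist b w = κ := by
    have : b - w = ((κ / s : ℝ) : ℂ) * (w - a) := by simp only [b]; push_cast; ring
    rw [dist_eq_norm, this, norm_mul, Complex.norm_real, Real.norm_eq_abs, hwa,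
      abs_of_pos (by positivity)]
    field_simp
  set K := (2 * s + κ) / κ
  have hK : 0 < K := by positivity
  set P : ℂ → ℂ := fun z => (b - a + (z - a)) / (b - z)
  have hPre : ∀ z ∈ sphere a s, (P z).re = κ * (2 * s + κ) / dist b z ^ 2 := by
    intro z hz
    simp only [P]
    rw [show b - z = b - a - (z - a) by ring, re_add_div_sub, sub_sub_sub_cancel_right,
      ← dist_eq_norm, ← dist_eq_norm, ← dist_eq_norm, hba, mem_sphere.1 hz]
    ring
  refine ⟨s + κ, by linarith, fun z => ((1 / K : ℝ) : ℂ) * (P z - ((1 / 2 : ℝ) : ℂ)), ?_, ?_, ?_⟩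
  · intro z hz
    have hbz : b - z ≠ 0 := by
      rw [sub_ne_zero]
      rintro rfl
      exact lt_irrefl _ (hba ▸ mem_ball.1 hz)
    fun_prop (disch := exact hbz)
  · have hPa : P a = 1 := by
      simp only [P, sub_self, add_zero]
      exact div_self (sub_ne_zero.2 (dist_ne_zero.1 (by rw [hba]; positivity)))
    simp only [Complex.re_ofReal_mul, Complex.sub_re, Complex.ofReal_re, hPa, Complex.one_re]
    exact mul_pos (by positivity) (by norm_num)
  · intro z hz
    have hbz₁ : κ ≤ dist b z := by
      linarith [dist_triangle b z a, mem_sphere.1 hz]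
    have hbz₂ : dist z w - κ ≤ dist b z := by
      linarith [dist_triangle z b w, dist_comm z b]
    simp only [Complex.re_ofReal_mul, Complex.sub_re, Complex.ofReal_re, hPre z hz]
    have hbz : 0 < dist b z := hκ.trans_le hbz₁
    constructor
    · have hX : κ * (2 * s + κ) / dist b z ^ 2 ≤ K := by
        calc κ * (2 * s + κ) / dist b z ^ 2 ≤ κ * (2 * s + κ) / κ ^ 2 := by gcongr
          _ = K := by simp only [K]; field_simp
      rw [one_div_mul_eq_div, div_le_one hK]
      linarith
    · intro hzw
      have hd'z : d' / 2 ≤ dist b z := by linarith [min_le_left d s]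
      have hX : κ * (2 * s + κ) / dist b z ^ 2 ≤ 1 / 2 := by
        rw [div_le_iff₀ (by positivity)]
        nlinarith
      exact mul_nonpos_of_nonneg_of_nonpos (by positivity) (by linarith)

lemma UpperSemicontinuousAt.exists_eventually_le_sub {X : Type*} [TopologicalSpace X]
    {u : X → EReal} {g : X → ℝ} {w : X} (hu : UpperSemicontinuousAt u w) (hg : ContinuousAt g w)
    (hlt : u w < g w) : ∃ e > 0, ∀ᶠ z in 𝓝 w, u z ≤ ((g z - e : ℝ) : EReal) := by
  obtain ⟨q, huq, hqg⟩ := EReal.exists_between_coe_real hlt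
  have hqg : q < g w := EReal.coe_lt_coe_iff.1 hqg
  refine ⟨(g w - q) / 2, by linarith, ?_⟩
  filter_upwards [hu q huq, hg.eventually (lt_mem_nhds (by linarith : q + (g w - q) / 2 < g w))]
    with z huz hgz
  exact huz.le.trans (EReal.coe_le_coe_iff.2 (by linarith))

lemma exists_differentiableOn_re_eq_log_dist {w z₀ : ℂ} (hw : w ≠ z₀) :
    ∃ L : ℂ → ℂ, DifferentiableOn ℂ L (ball w (dist w z₀)) ∧
      ∀ z ≠ z₀, (L z).re = Real.log (dist z z₀) := by
  have hwz₀ : w - z₀ ≠ 0 := sub_ne_zero.2 hw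
  refine ⟨fun z => (Real.log ‖w - z₀‖ : ℂ) + Complex.log ((z - z₀) / (w - z₀)), ?_, ?_⟩
  · intro z hz
    have hslit : (z - z₀) / (w - z₀) ∈ Complex.slitPlane := by
      rw [show (z - z₀) / (w - z₀) = 1 + (z - w) / (w - z₀) by field_simp; ring]
      refine Complex.mem_slitPlane_of_norm_lt_one ?_
      rw [norm_div, div_lt_one (norm_pos_iff.2 hwz₀), ← dist_eq_norm, ← dist_eq_norm]
      exact mem_ball.1 hz
    have hdiff : DifferentiableAt ℂ (fun z => (z - z₀) / (w - z₀)) z := by fun_prop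
    exact ((hdiff.clog hslit).const_add _).differentiableWithinAt
  · intro z hz
    simp only [Complex.add_re, Complex.ofReal_re, Complex.log_re, norm_div]
    rw [Real.log_div (norm_ne_zero_iff.2 (sub_ne_zero.2 hz)) (norm_ne_zero_iff.2 hwz₀),
      dist_eq_norm]
    ring

lemma UpperSemicontinuousOn.exists_isMaxOn_farthest {X γ : Type*} [PseudoMetricSpace X]
    [LinearOrder γ] {φ : X → γ} {D : Set X} (hφ : UpperSemicontinuousOn φ D) (hD : IsCompact D)
    (hne : D.Nonempty) (z₀ : X) :
    ∃ w ∈ D, IsMaxOn φ D w ∧ ∀ y ∈ D, dist w z₀ < dist y z₀ → φ y < φ w := by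
  obtain ⟨w₀, hw₀, hmax⟩ := hφ.exists_isMaxOn hne hD
  obtain ⟨w, ⟨hwD, hw⟩, hfar⟩ := (hφ.isCompact_inter_preimage_Ici hD (φ w₀)).exists_isMaxOn
    ⟨w₀, hw₀, le_rfl⟩ (continuous_id.dist continuous_const).continuousOn
  have hφw : φ w = φ w₀ := le_antisymm (hmax hwD) hw
  refine ⟨w, hwD, fun y hy => hφw ▸ hmax hy, fun y hy hwy => hφw ▸ lt_of_not_ge fun hy' => ?_⟩
  exact (hfar ⟨hy, hy'⟩ : dist y z₀ ≤ dist w z₀).not_gt hwy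

lemma EReal.sub_coe_ne_top {x : EReal} (hx : x ≠ ⊤) (r : ℝ) : x - r ≠ ⊤ := by
  induction x with
  | bot => simp
  | coe x => simp [← EReal.coe_sub]
  | top => exact absurd rfl hx

lemma UpperSemicontinuousOn.sub_coe {X : Type*} [TopologicalSpace X] {u : X → EReal}
    {h : X → ℝ} {D : Set X} (hu : UpperSemicontinuousOn u D) (hh : ContinuousOn h D) :
    UpperSemicontinuousOn (fun y => u y - h y) D := by
  simp only [sub_eq_add_neg, ← EReal.coe_neg]
  refine hu.add' (fun y hy => ?_) fun y _ =>
    EReal.continuousAt_add (.inr (EReal.coe_ne_bot _)) (.inr (EReal.coe_ne_top _))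
  exact (continuous_coe_real_ereal.comp_continuousOn hh.neg y hy).upperSemicontinuousWithinAt

lemma exists_sphere_subset_annulus {E : Type*} [NormedAddCommGroup E] [NormedSpace ℝ E]
    {a z₀ : E} {δ R : ℝ} (hδ : 0 < δ) (hδa : δ < dist a z₀) (haR : dist a z₀ < R) :
    ∃ s > 0, s < dist a z₀ ∧ (∀ y ∈ sphere a s, δ ≤ dist y z₀ ∧ dist y z₀ ≤ R) ∧
      ∃ w ∈ sphere a s, dist a z₀ < dist w z₀ := by
  set r := dist a z₀
  have hr : 0 < r := hδ.trans hδa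
  set s := min (R - r) (r - δ)
  have hs : 0 < s := lt_min (by linarith) (by linarith)
  have hsR : s ≤ R - r := min_le_left _ _
  have hsδ : s ≤ r - δ := min_le_right _ _
  refine ⟨s, hs, by linarith, fun y hy => ⟨?_, ?_⟩, a + (s / r) • (a - z₀), ?_, ?_⟩
  · linarith [dist_triangle a y z₀, dist_comm a y, mem_sphere.1 hy]
  · linarith [dist_triangle y a z₀, mem_sphere.1 hy]
  · rw [mem_sphere, dist_eq_norm, add_sub_cancel_left, norm_smul, ← dist_eq_norm,
      Real.norm_of_nonneg (by positivity), div_mul_cancel₀ _ hr.ne']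
  · have : a + (s / r) • (a - z₀) - z₀ = (1 + s / r) • (a - z₀) := by
      rw [add_smul, one_smul]; abel
    rw [dist_eq_norm, this, norm_smul, ← dist_eq_norm, Real.norm_of_nonneg (by positivity)]
    nlinarith [div_pos hs hr]

namespace SubharmonicC

variable {u : ℂ → EReal}

theorem le_re_of_differentiableOn (hu : SubharmonicC u) {f : ℂ → ℂ} {a : ℂ} {s ρ : ℝ}
    (hs : 0 < s) (hsρ : s < ρ) (hf : DifferentiableOn ℂ f (ball a ρ))
    (hle : ∀ z ∈ sphere a s, u z ≤ ((f z).re : EReal)) :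
    ∀ z ∈ closedBall a s, u z ≤ ((f z).re : EReal) := by
  intro z hz
  refine EReal.le_of_forall_lt_iff_le.1 fun x hx => ?_
  have hε : 0 < (x - (f z).re) / 2 := by
    have := EReal.coe_lt_coe_iff.1 hx
    linarith
  obtain ⟨p, hp⟩ := exists_polynomial_dist_lt hs.le hsρ hf hε
  have hre : ∀ w ∈ closedBall a s, |(f w).re - (p.eval w).re| < (x - (f z).re) / 2 :=
    fun w hw => by simpa using (Complex.abs_re_le_norm (f w - p.eval w)).trans_lt (hp w hw)
  have hq : ∀ w, ((p + C (((x - (f z).re) / 2 : ℝ) : ℂ)).eval w).re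
      = (p.eval w).re + (x - (f z).re) / 2 := fun w => by simp
  have hdom := hu.2 a s hs _ (fun w hw => (hle w hw).trans <| by
    rw [hq, EReal.coe_le_coe_iff]
    linarith [abs_lt.1 (hre w (sphere_subset_closedBall hw))]) z hz
  refine hdom.trans ?_
  rw [hq, EReal.coe_le_coe_iff]
  linarith [abs_lt.1 (hre z hz)]

theorem lt_re_of_eventually_le_sub (hu : SubharmonicC u) {f : ℂ → ℂ} {a w : ℂ} {s ρ ε : ℝ}
    (hs : 0 < s) (hsρ : s < ρ) (hf : DifferentiableOn ℂ f (ball a ρ)) (hw : w ∈ sphere a s)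
    (hε : 0 < ε) (hle : ∀ z ∈ sphere a s, u z ≤ ((f z).re : EReal))
    (hlt : ∀ᶠ z in 𝓝 w, u z ≤ (((f z).re - ε : ℝ) : EReal)) : u a < ((f a).re : EReal) := by
  obtain ⟨d, hd, hnear⟩ := Metric.eventually_nhds_iff.1 hlt
  obtain ⟨ρ', hsρ', F, hF, hFa, hFs⟩ := exists_peak_function hs hd hw
  set G := fun z => f z - ε * F z
  have hGre : ∀ z, (G z).re = (f z).re - ε * (F z).re := fun z => by simp [G]
  have hGdiff : DifferentiableOn ℂ G (ball a (min ρ ρ')) :=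
    (hf.mono (ball_subset_ball (min_le_left _ _))).sub
      ((hF.mono (ball_subset_ball (min_le_right _ _))).const_mul _)
  have hGs : ∀ z ∈ sphere a s, u z ≤ ((G z).re : EReal) := by
    intro z hz
    obtain ⟨hF1, hF0⟩ := hFs z hz
    rw [hGre]
    by_cases hzw : dist z w < d
    · exact (hnear hzw).trans (EReal.coe_le_coe_iff.2 (by nlinarith))
    · exact (hle z hz).trans (EReal.coe_le_coe_iff.2 (by nlinarith [hF0 (not_lt.1 hzw)]))
  have hGa := hu.le_re_of_differentiableOn hs (lt_min hsρ hsρ') hGdiff hGs a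
    (mem_closedBall_self hs.le)
  rw [hGre] at hGa
  exact hGa.trans_lt (EReal.coe_lt_coe_iff.2 (by nlinarith))

theorem lt_log_dist_of_lt (hu : SubharmonicC u) {z₀ a w : ℂ} {s c β : ℝ} (hs : 0 < s)
    (hsa : s < dist a z₀) (hw : w ∈ sphere a s)
    (hle : ∀ z ∈ sphere a s, u z ≤ ((c + β * Real.log (dist z z₀) : ℝ) : EReal))
    (hlt : u w < ((c + β * Real.log (dist w z₀) : ℝ) : EReal)) :
    u a < ((c + β * Real.log (dist a z₀) : ℝ) : EReal) := by
  have hne : ∀ z ∈ sphere a s, z ≠ z₀ := by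
    rintro z hz rfl
    rw [mem_sphere, dist_comm] at hz
    exact hsa.ne' hz
  have ha : a ≠ z₀ := dist_pos.1 (hs.trans hsa)
  obtain ⟨L, hL, hLre⟩ := exists_differentiableOn_re_eq_log_dist ha
  set f := fun z => (c : ℂ) + β * L z
  have hfre : ∀ z ≠ z₀, (f z).re = c + β * Real.log (dist z z₀) := fun z hz => by
    simp [f, hLre z hz]
  have hg : ContinuousAt (fun z => c + β * Real.log (dist z z₀)) w :=
    (continuousAt_const.mul ((continuous_dist.comp₂ continuous_id continuous_const).continuousAt.log
      (dist_ne_zero.2 (hne w hw)))).const_add c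
  obtain ⟨e, he, hev⟩ := (hu.1.upperSemicontinuousAt w).exists_eventually_le_sub hg hlt
  rw [← hfre a ha]
  refine hu.lt_re_of_eventually_le_sub hs hsa (hL.const_mul _ |>.const_add _) hw he
    (fun z hz => (hfre z (hne z hz)).symm ▸ hle z hz) ?_
  filter_upwards [hev, eventually_ne_nhds (hne w hw)] with z hz hz₀
  rwa [hfre z hz₀]

theorem le_log_dist_of_le_on_spheres (hu : SubharmonicC u) (hfin : ∀ z, u z ≠ ⊤) {z₀ : ℂ}
    {δ R c β : ℝ} (hδ : 0 < δ)
    (hin : ∀ z ∈ sphere z₀ δ, u z ≤ ((c + β * Real.log δ : ℝ) : EReal))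
    (hout : ∀ z ∈ sphere z₀ R, u z ≤ ((c + β * Real.log R : ℝ) : EReal)) {z : ℂ}
    (hδz : δ ≤ dist z z₀) (hzR : dist z z₀ ≤ R) :
    u z ≤ ((c + β * Real.log (dist z z₀) : ℝ) : EReal) := by
  set h : ℂ → ℝ := fun y => c + β * Real.log (dist y z₀)
  set D := closedBall z₀ R \ ball z₀ δ
  have hmemD : ∀ {y}, y ∈ D ↔ δ ≤ dist y z₀ ∧ dist y z₀ ≤ R := by
    simp [D, and_comm]
  have hh : ContinuousOn h D := fun y hy =>
    (continuousAt_const.mul ((continuous_dist.comp₂ continuous_id continuous_const).continuousAt.log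
      (hδ.trans_le (hmemD.1 hy).1).ne')).const_add c |>.continuousWithinAt
  have hφle : ∀ y (m : ℝ),
      u y - h y ≤ m ↔ u y ≤ ((m + c + β * Real.log (dist y z₀) : ℝ) : EReal) := by
    intro y m
    rw [EReal.sub_le_iff_le_add (.inl (EReal.coe_ne_bot _)) (.inl (EReal.coe_ne_top _)),
      ← EReal.coe_add, add_assoc]
  have hleφ : ∀ y (m : ℝ),
      m ≤ u y - h y ↔ ((m + c + β * Real.log (dist y z₀) : ℝ) : EReal) ≤ u y := by
    intro y m
    rw [EReal.le_sub_iff_add_le (.inl (EReal.coe_ne_bot _)) (.inl (EReal.coe_ne_top _)),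
      ← EReal.coe_add, add_assoc]
  by_contra hz
  have hzD : z ∈ D := hmemD.2 ⟨hδz, hzR⟩
  obtain ⟨wm, hwmD, hmax, hfar⟩ :=
    ((hu.1.upperSemicontinuousOn D).sub_coe hh).exists_isMaxOn_farthest
      ((isCompact_closedBall z₀ R).diff isOpen_ball) ⟨z, hzD⟩ z₀
  have hpos : 0 < u wm - h wm := by
    refine lt_of_lt_of_le ?_ (hmax hzD)
    rw [← not_le, ← EReal.coe_zero, hφle, zero_add]
    exact hz
  obtain ⟨m, hm⟩ : ∃ m : ℝ, u wm - h wm = m :=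
    ⟨_, (EReal.coe_toReal (EReal.sub_coe_ne_top (hfin wm) _) hpos.ne_bot).symm⟩
  have hmpos : 0 < m := EReal.coe_pos.1 (hm ▸ hpos)
  have hleD : ∀ y ∈ D, u y ≤ ((m + c + β * Real.log (dist y z₀) : ℝ) : EReal) :=
    fun y hy => (hφle y m).1 (hm ▸ hmax hy)
  have hwm := (hleφ wm m).1 hm.ge
  have hδr : δ < dist wm z₀ := by
    refine (hmemD.1 hwmD).1.lt_of_ne fun hr => ?_
    have := hwm.trans (hin wm (mem_sphere.2 hr.symm))
    rw [← hr, EReal.coe_le_coe_iff] at this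
    linarith
  have hrR : dist wm z₀ < R := by
    refine (hmemD.1 hwmD).2.lt_of_ne fun hr => ?_
    have := hwm.trans (hout wm (mem_sphere.2 hr))
    rw [hr, EReal.coe_le_coe_iff] at this
    linarith
  obtain ⟨s, hs, hsr, hsphere, w₁, hw₁, hw₁far⟩ := exists_sphere_subset_annulus hδ hδr hrR
  have hw₁lt : u w₁ < ((m + c + β * Real.log (dist w₁ z₀) : ℝ) : EReal) := by
    rw [← not_le, ← hleφ, ← hm, not_le]
    exact hfar w₁ (hmemD.2 (hsphere w₁ hw₁)) hw₁far
  exact (hu.lt_log_dist_of_lt hs hsr hw₁ (fun y hy => hleD y (hmemD.2 (hsphere y hy)))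
    hw₁lt).not_ge hwm

theorem le_log_interpolation (hu : SubharmonicC u) {M t δ R : ℝ} {z₀ z : ℂ}
    (hM : ∀ w, u w ≤ M) (hδ : 0 < δ) (hδR : δ < R) (hin : ∀ w ∈ sphere z₀ δ, u w ≤ t)
    (hδz : δ ≤ dist z z₀) (hzR : dist z z₀ ≤ R) :
    u z ≤ ((t + (M - t) * Real.log (dist z z₀ / δ) / Real.log (R / δ) : ℝ) : EReal) := by
  have hlog : 0 < Real.log (R / δ) := Real.log_pos ((one_lt_div hδ).2 hδR)
  set β := (M - t) / Real.log (R / δ)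
  have hβ : ∀ r, 0 < r → t - β * Real.log δ + β * Real.log r
      = t + (M - t) * Real.log (r / δ) / Real.log (R / δ) := by
    intro r hr
    rw [Real.log_div hr.ne' hδ.ne']
    ring
  have := hu.le_log_dist_of_le_on_spheres (fun w => ((hM w).trans_lt (EReal.coe_lt_top M)).ne)
    (c := t - β * Real.log δ) (β := β) hδ (fun w hw => by rw [sub_add_cancel]; exact hin w hw)
    (fun w hw => by
      rw [hβ R (hδ.trans hδR), mul_div_assoc, div_self hlog.ne', mul_one, add_sub_cancel]
      exact hM w) hδz hzR
  rwa [hβ _ (hδ.trans_le hδz)] at this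

end SubharmonicC

/-- A bounded-above subharmonic function on ℂ that takes the value -∞ at some point
is identically -∞. -/
theorem stmt_8 (u : ℂ → EReal) (hsub : SubharmonicC u)
    (hbd : ∃ M : ℝ, ∀ z, u z ≤ (M : EReal)) (h : ∃ z₀, u z₀ = ⊥) :
    ∀ z, u z = ⊥ := by
  obtain ⟨M, hM⟩ := hbd
  obtain ⟨z₀, hz₀⟩ := h
  intro z
  suffices hle : ∀ t : ℝ, u z ≤ t from (EReal.eq_bot_iff_forall_lt _).2 fun t =>
    (hle (t - 1)).trans_lt (EReal.coe_lt_coe_iff.2 (by linarith))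
  intro t
  obtain ⟨δ, hδ, hball⟩ := Metric.nhds_basis_closedBall.eventually_iff.1
    (hsub.1 z₀ t (show u z₀ < t from hz₀ ▸ EReal.bot_lt_coe t))
  rcases le_or_gt (dist z z₀) δ with hz | hz
  · exact (hball hz).le
  have hlim : Tendsto (fun R => t + (M - t) * Real.log (dist z z₀ / δ) / Real.log (R / δ))
      atTop (𝓝 t) := by
    simpa using tendsto_const_nhds.add (tendsto_const_nhds.div_atTop
      (Real.tendsto_log_atTop.comp (tendsto_id.atTop_div_const hδ)))
  refine ge_of_tendsto ((continuous_coe_real_ereal.tendsto t).comp hlim) ?_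
  filter_upwards [eventually_ge_atTop (dist z z₀)] with R hR
  exact hsub.le_log_interpolation hM hδ (hz.trans_le hR)
    (fun w hw => (hball (sphere_subset_closedBall hw)).le) hz.le hR
end

section
/- Let h : C² → C² be given by h(x,y) = (x^λ + y^μ, x) with integers λ > μ ≥ 1. In the local coordinates (t,x) near the point I = [0:0:1] of P², the extension of h is h(t,x) = (t/x, (x^λ + t^{λ-μ})/(x t^{λ-1})). If 0 < |t| < |x| < 1 and |x^λ + t^{λ-μ}| < |x| |t|^{λ-1}, then |x|^λ < 2|t|^{λ-μ}, and consequently |t|/|x| ≥ 2^{-1/(λ-μ)} |x|^{μ/(λ-μ)}. -/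
/-! On the region `0 < |t| < |x| < 1` the right-hand side `|x| |t|^(λ-1)` of the hypothesis is
at most `|t|^(λ-μ)`, so the triangle inequality gives `|x|^λ < 2 |t|^(λ-μ)`. Taking
`(λ-μ)`-th roots of `|x|^μ · |x|^(λ-μ) / 2 < |t|^(λ-μ)` gives the lower bound on `|t| / |x|`. -/

open Real

theorem norm_pow_lt_two_mul_norm_pow_of_norm_add_lt {𝕜 : Type*} [NormedDivisionRing 𝕜]
    {x t : 𝕜} {p q n : ℕ} (hx : ‖x‖ ≤ 1) (ht : ‖t‖ ≤ 1) (hqn : q ≤ n)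
    (h : ‖x ^ p + t ^ q‖ < ‖x‖ * ‖t‖ ^ n) :
    ‖x‖ ^ p < 2 * ‖t‖ ^ q := by
  have hsmall : ‖x‖ * ‖t‖ ^ n ≤ ‖t‖ ^ q :=
    calc ‖x‖ * ‖t‖ ^ n ≤ 1 * ‖t‖ ^ n := by gcongr
      _ ≤ ‖t‖ ^ q := by rw [one_mul]; exact pow_le_pow_of_le_one (norm_nonneg t) ht hqn
  have htriangle := norm_le_add_norm_add (x ^ p) (t ^ q)
  rw [norm_pow, norm_pow] at htriangle
  linarith

theorem Real.mul_rpow_div_lt_of_rpow_add_lt_two_mul {a s p k : ℝ} (ha : 0 < a) (hs : 0 ≤ s)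
    (hk : 0 < k) (h : a ^ (p + k) < 2 * s ^ k) :
    2 ^ (-1 / k) * a ^ (p / k) < s / a := by
  rw [lt_div_iff₀ ha, ← rpow_lt_rpow_iff (by positivity) hs hk, mul_rpow (by positivity) ha.le,
    mul_rpow (by positivity) (by positivity), ← rpow_mul zero_le_two, ← rpow_mul ha.le,
    div_mul_cancel₀ _ hk.ne', div_mul_cancel₀ _ hk.ne', rpow_neg_one, mul_assoc,
    ← rpow_add ha]
  linarith

/-- The key estimate for h(x,y) = (x^λ + y^μ, x) near I = [0:0:1]: if 0 < |t| < |x| < 1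
and |x^λ + t^{λ-μ}| < |x| |t|^{λ-1}, then |x|^λ < 2|t|^{λ-μ} and hence
|t|/|x| ≥ 2^{-1/(λ-μ)} |x|^{μ/(λ-μ)}. -/
theorem stmt_12 (lam mu : ℕ) (hmu : 1 ≤ mu) (hml : mu < lam) (t x : ℂ)
    (ht0 : 0 < ‖t‖) (htx : ‖t‖ < ‖x‖)
    (hx1 : ‖x‖ < 1)
    (h : ‖x ^ lam + t ^ (lam - mu)‖ < ‖x‖ * ‖t‖ ^ (lam - 1)) :
    ‖x‖ ^ lam < 2 * ‖t‖ ^ (lam - mu) ∧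
    (2 : ℝ) ^ (-(1 : ℝ) / ((lam : ℝ) - mu)) * ‖x‖ ^ ((mu : ℝ) / ((lam : ℝ) - mu)) ≤
      ‖t‖ / ‖x‖ := by
  have hpow : ‖x‖ ^ lam < 2 * ‖t‖ ^ (lam - mu) :=
    norm_pow_lt_two_mul_norm_pow_of_norm_add_lt hx1.le (htx.trans hx1).le (by omega) h
  refine ⟨hpow, (mul_rpow_div_lt_of_rpow_add_lt_two_mul (ht0.trans htx) ht0.le
    (by simpa using hml) ?_).le⟩
  rwa [add_sub_cancel, rpow_natCast, ← Nat.cast_sub hml.le, rpow_natCast]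
end

section
/- Let φ, u : B → [-∞, ∞) where B is an open neighborhood of p, with u subharmonic-type satisfying a maximality property, and suppose D_j, j > 0, is a decreasing sequence of relatively compact subdomains of a domain D ∋ p with ∩_j D_j = {p}, and ρ + φ ≤ (1 − 1/j)(u + M) on ∂D ∪ ∂D_j for each j, where the inequality propagates to D \ D_j by maximality of u on D \ {p}. Then ρ + φ ≤ u + M on D \ {p}, and hence on D by upper semicontinuity. -/
open Filter Topology

theorem Antitone.eventually_notMem_of_notMem_iInter {X : Type*} {s : ℕ → Set X}
    (hs : Antitone s) {x : X} (hx : x ∉ ⋂ i, s i) : ∀ᶠ i in atTop, x ∉ s i := by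
  obtain ⟨i₀, hi₀⟩ : ∃ i₀, x ∉ s i₀ := by simpa using hx
  filter_upwards [eventually_ge_atTop i₀] with i hi hxi
  exact hi₀ (hs hi hxi)

theorem EReal.le_of_eventually_le_mul_of_tendsto_one {ι : Type*} {l : Filter ι} [l.NeBot]
    {c : ι → ℝ} (hc : Tendsto c l (𝓝 1)) {x a : EReal} (h : ∀ᶠ i in l, x ≤ c i * a) :
    x ≤ a := by
  -- `EReal` multiplication is continuous at `(1, a)` even for `a = ±∞`: no case split on `a`.
  have hmul : ContinuousAt (fun z : EReal × EReal => z.1 * z.2) (1, a) :=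
    EReal.continuousAt_mul (by simp) (by simp) (.inl (EReal.coe_ne_bot 1))
      (.inl (EReal.coe_ne_top 1))
  have hca : Tendsto (fun i => (c i : EReal) * a) l (𝓝 a) := by
    have := hmul.tendsto.comp ((continuous_coe_real_ereal.tendsto 1).comp hc |>.prodMk_nhds
      (tendsto_const_nhds (x := a)))
    simpa [Function.comp_def] using this
  exact ge_of_tendsto hca h

theorem stmt_19_general {X : Type*} [TopologicalSpace X] (D : Set X) (p : X)
    (Dj : ℕ → Set X) (hanti : Antitone Dj)
    (hcap : (⋂ j, Dj j) = {p})
    (ρ : X → ℝ) (φ u : X → EReal) (M : ℝ)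
    (hφp : φ p = ⊥)
    (hprop : ∀ j : ℕ, 1 ≤ j → ∀ q ∈ D \ Dj j,
      (ρ q : EReal) + φ q ≤ (((1 - 1 / (j : ℝ)) : ℝ) : EReal) * (u q + (M : EReal))) :
    ∀ q ∈ D, (ρ q : EReal) + φ q ≤ u q + (M : EReal) := by
  intro q hq
  rcases eq_or_ne q p with rfl | hqp
  · simp [hφp]
  have hq_notMem : q ∉ ⋂ j, Dj j := by rwa [hcap]
  refine EReal.le_of_eventually_le_mul_of_tendsto_one (c := fun j : ℕ => 1 - 1 / (j : ℝ))
    (by simpa using (tendsto_const_nhds (x := (1 : ℝ))).sub tendsto_one_div_atTop_nhds_zero_nat)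
    ?_
  filter_upwards [eventually_ge_atTop 1,
    hanti.eventually_notMem_of_notMem_iInter hq_notMem] with j hj hqj
  exact hprop j hj q ⟨hq, hqj⟩

/-- The comparison step in the construction of the Green function: if D_j is a
decreasing sequence of subsets of a domain D with ⋂_j D_j = {p}, u ≤ 0 with
u(p) = -∞, φ(p) = -∞, and for every j ≥ 1 the inequality
ρ + φ ≤ (1 − 1/j)(u + M) holds on D \ D_j (as propagated from ∂D ∪ ∂D_j by
maximality of u on D \ {p}), then ρ + φ ≤ u + M holds on all of D. -/
theorem stmt_19 {X : Type*} [TopologicalSpace X] (D : Set X) (p : X) (hp : p ∈ D)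
    (Dj : ℕ → Set X) (hanti : Antitone Dj) (hDjD : ∀ j, Dj j ⊆ D)
    (hcap : (⋂ j, Dj j) = {p})
    (ρ : X → ℝ) (φ u : X → EReal) (M : ℝ)
    (huneg : ∀ q, u q ≤ 0) (hup : u p = ⊥) (hφp : φ p = ⊥)
    (hprop : ∀ j : ℕ, 1 ≤ j → ∀ q ∈ D \ Dj j,
      (ρ q : EReal) + φ q ≤ (((1 - 1 / (j : ℝ)) : ℝ) : EReal) * (u q + (M : EReal))) :
    ∀ q ∈ D, (ρ q : EReal) + φ q ≤ u q + (M : EReal) :=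
  stmt_19_general D p Dj hanti hcap ρ φ u M hφp hprop
end
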